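/- arXiv:2404.04398 — 5 statements merged into one kernel-verified Lean document; each statement's English description precedes it below -/
import Mathlib

section
/- Well-posedness of the Bayesian posterior (existence of a positive finite normalizing constant): let a < b be reals, ℓ : [a,b] → ℝ² continuous, ρ > 0, λ_b > 0, and for i = 1,…,n let s_i ∈ ℝ², r_i > 0, and y_i ∈ {0,1}. Define the negative log-likelihood Φ : C([a,b],ℝ) → ℝ by Φ(u) = ∑_{i=1}^n [ −y_i · log(1 − exp(−r_i (λ_b + E_i(u)))) + (1 − y_i) · r_i (λ_b + E_i(u)) ], where E_i(u) = ∫_a^b exp(−‖ℓ(c)−s_i‖/ρ) exp(u(c)) dc. Then Φ is continuous (hence Borel measurable) and nonnegative, and for every Borel probability measure μ₀ on C([a,b],ℝ) (with the supremum metric), the normalizing constant Z = ∫ exp(−Φ(u)) dμ₀(u) satisfies 0 < Z ≤ 1. -/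
open MeasureTheory

/-- Well-posedness of the Bayesian posterior: the negative log-likelihood
`Φ(u) = ∑_i [−y_i log(1 − exp(−r_i(λ_b + E_i(u)))) + (1−y_i) r_i (λ_b + E_i(u))]`,
with `E_i(u) = ∫_a^b exp(−‖ℓ(c)−s_i‖/ρ) exp(u(c)) dc`, is continuous and nonnegative
on `C([a,b],ℝ)`, and for every Borel probability measure `μ₀` on `C([a,b],ℝ)` the
normalizing constant `Z = ∫ exp(−Φ(u)) dμ₀(u)` satisfies `0 < Z ≤ 1`. -/
theorem posterior_well_posed (a b : ℝ) (hab : a < b)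
    (ℓ : ℝ → EuclideanSpace ℝ (Fin 2)) (hℓ : ContinuousOn ℓ (Set.Icc a b))
    (ρ : ℝ) (hρ : 0 < ρ) (lamb : ℝ) (hlamb : 0 < lamb)
    (n : ℕ) (s : Fin n → EuclideanSpace ℝ (Fin 2))
    (r : Fin n → ℝ) (hr : ∀ i, 0 < r i)
    (y : Fin n → ℝ) (hy : ∀ i, y i = 0 ∨ y i = 1)
    (Φ : C(Set.Icc a b, ℝ) → ℝ)
    (hΦ : ∀ u : C(Set.Icc a b, ℝ),
      Φ u = ∑ i : Fin n,
        (-(y i) * Real.log (1 - Real.exp (-(r i *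
            (lamb + ∫ c in a..b,
              Real.exp (-‖ℓ c - s i‖ / ρ) * Real.exp (u (Set.projIcc a b hab.le c)))))) +
          (1 - y i) * (r i *
            (lamb + ∫ c in a..b,
              Real.exp (-‖ℓ c - s i‖ / ρ) * Real.exp (u (Set.projIcc a b hab.le c)))))) :
    Continuous Φ ∧ (∀ u, 0 ≤ Φ u) ∧
      ∀ (m : MeasurableSpace C(Set.Icc a b, ℝ)),
        BorelSpace C(Set.Icc a b, ℝ) →
          ∀ μ₀ : Measure C(Set.Icc a b, ℝ), IsProbabilityMeasure μ₀ →
            0 < (∫ u, Real.exp (-Φ u) ∂μ₀) ∧ (∫ u, Real.exp (-Φ u) ∂μ₀) ≤ 1 := by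
  -- weight functions
  set g : Fin n → ℝ → ℝ := fun i c => Real.exp (-‖ℓ c - s i‖ / ρ) with hg
  have hg0 : ∀ i c, 0 ≤ g i c := fun i c => (Real.exp_pos _).le
  have hg1 : ∀ i c, g i c ≤ 1 := by
    intro i c
    apply Real.exp_le_one_iff.2
    exact div_nonpos_of_nonpos_of_nonneg (neg_nonpos.2 (norm_nonneg _)) hρ.le
  have hgcont : ∀ i, ContinuousOn (g i) (Set.Icc a b) := by
    intro i
    exact Real.continuous_exp.comp_continuousOn
      (((hℓ.sub continuousOn_const).norm.neg).div_const ρ)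
  -- the linear-type functional on continuous maps
  set L : Fin n → C(Set.Icc a b, ℝ) → ℝ :=
    fun i v => ∫ c in a..b, g i c * v (Set.projIcc a b hab.le c) with hL
  have hInt : ∀ i (v : C(Set.Icc a b, ℝ)),
      IntervalIntegrable (fun c => g i c * v (Set.projIcc a b hab.le c))
        MeasureTheory.volume a b := by
    intro i v
    apply ContinuousOn.intervalIntegrable
    rw [Set.uIcc_of_le hab.le]
    exact (hgcont i).mul ((v.continuous.comp continuous_projIcc).continuousOn)
  have hLlip : ∀ i, LipschitzWith (Real.toNNReal (b - a)) (L i) := by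
    intro i
    apply LipschitzWith.of_dist_le_mul
    intro v w
    rw [Real.dist_eq, Real.coe_toNNReal _ (sub_nonneg.2 hab.le)]
    have hsub : L i v - L i w =
        ∫ c in a..b, (g i c * v (Set.projIcc a b hab.le c)
          - g i c * w (Set.projIcc a b hab.le c)) :=
      (intervalIntegral.integral_sub (hInt i v) (hInt i w)).symm
    rw [hsub]
    have := intervalIntegral.norm_integral_le_of_norm_le_const
      (C := dist v w)
      (f := fun c => g i c * v (Set.projIcc a b hab.le c)
          - g i c * w (Set.projIcc a b hab.le c)) (a := a) (b := b) ?_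
    · calc |∫ c in a..b, (g i c * v (Set.projIcc a b hab.le c)
          - g i c * w (Set.projIcc a b hab.le c))| ≤ dist v w * |b - a| := this
      _ = (b - a) * dist v w := by
          rw [abs_of_nonneg (sub_nonneg.2 hab.le)]; ring
    · intro c _
      have h1 : ‖g i c * v (Set.projIcc a b hab.le c)
          - g i c * w (Set.projIcc a b hab.le c)‖
          = g i c * ‖v (Set.projIcc a b hab.le c) - w (Set.projIcc a b hab.le c)‖ := by
        rw [← mul_sub, norm_mul, Real.norm_eq_abs (g i c), abs_of_nonneg (hg0 i c)]
      rw [h1]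
      calc g i c * ‖v (Set.projIcc a b hab.le c) - w (Set.projIcc a b hab.le c)‖
          ≤ 1 * dist v w := by
            apply mul_le_mul (hg1 i c) ?_ (norm_nonneg _) zero_le_one
            rw [← dist_eq_norm]
            exact ContinuousMap.dist_apply_le_dist _
        _ = dist v w := one_mul _
  -- exp postcomposition
  set P : C(Set.Icc a b, ℝ) → C(Set.Icc a b, ℝ) :=
    fun u => (⟨Real.exp, Real.continuous_exp⟩ : C(ℝ, ℝ)).comp u with hP
  have hPcont : Continuous P := ContinuousMap.continuous_postcomp _
  -- E
  set E : Fin n → C(Set.Icc a b, ℝ) → ℝ := fun i u =>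
    ∫ c in a..b, Real.exp (-‖ℓ c - s i‖ / ρ) * Real.exp (u (Set.projIcc a b hab.le c))
    with hE
  have hEL : ∀ i u, E i u = L i (P u) := fun i u => rfl
  have hEcont : ∀ i, Continuous (E i) := by
    intro i
    have : Continuous (fun u => L i (P u)) := (hLlip i).continuous.comp hPcont
    exact this
  have hE0 : ∀ i u, 0 ≤ E i u := by
    intro i u
    apply intervalIntegral.integral_nonneg hab.le
    intro c _
    exact mul_nonneg (Real.exp_pos _).le (Real.exp_pos _).le
  -- positivity of the log argument
  have hA : ∀ i u, 0 < 1 - Real.exp (-(r i * (lamb + E i u))) := by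
    intro i u
    have ht : 0 < r i * (lamb + E i u) :=
      mul_pos (hr i) (by linarith [hE0 i u])
    have : Real.exp (-(r i * (lamb + E i u))) < 1 := by
      rw [Real.exp_lt_one_iff]; linarith
    linarith
  -- rewrite Φ
  have hΦeq : Φ = fun u => ∑ i : Fin n,
      (-(y i) * Real.log (1 - Real.exp (-(r i * (lamb + E i u)))) +
        (1 - y i) * (r i * (lamb + E i u))) := funext hΦ
  -- continuity
  have hcont : Continuous Φ := by
    rw [hΦeq]
    apply continuous_finset_sum
    intro i _
    have h1 : Continuous fun u => 1 - Real.exp (-(r i * (lamb + E i u))) := by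
      continuity
    have h2 : Continuous fun u => Real.log (1 - Real.exp (-(r i * (lamb + E i u)))) :=
      h1.log (fun u => (hA i u).ne')
    exact (continuous_const.mul h2).add
      (continuous_const.mul (continuous_const.mul (continuous_const.add (hEcont i))))
  -- nonnegativity
  have hnonneg : ∀ u, 0 ≤ Φ u := by
    intro u
    rw [hΦeq]
    apply Finset.sum_nonneg
    intro i _
    rcases hy i with h0 | h1
    · rw [h0]
      have : 0 ≤ r i * (lamb + E i u) := (mul_pos (hr i) (by linarith [hE0 i u])).le
      nlinarith
    · rw [h1]
      have hlog : Real.log (1 - Real.exp (-(r i * (lamb + E i u)))) ≤ 0 :=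
        Real.log_nonpos (hA i u).le (by linarith [Real.exp_pos (-(r i * (lamb + E i u)))])
      nlinarith
  refine ⟨hcont, hnonneg, ?_⟩
  intro m bs μ₀ hμ₀
  haveI := bs
  haveI := hμ₀
  have hfcont : Continuous fun u => Real.exp (-Φ u) := Real.continuous_exp.comp hcont.neg
  have hfle : ∀ u, Real.exp (-Φ u) ≤ 1 := fun u =>
    Real.exp_le_one_iff.2 (neg_nonpos.2 (hnonneg u))
  have hfi : Integrable (fun u => Real.exp (-Φ u)) μ₀ := by
    apply Integrable.mono' (integrable_const (1 : ℝ)) hfcont.aestronglyMeasurable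
    filter_upwards with u
    rw [Real.norm_eq_abs, abs_of_pos (Real.exp_pos _)]
    exact hfle u
  constructor
  · rw [integral_pos_iff_support_of_nonneg (fun u => (Real.exp_pos _).le) hfi]
    have : Function.support (fun u => Real.exp (-Φ u)) = Set.univ := by
      ext u; simp [Function.support, (Real.exp_pos (-Φ u)).ne']
    rw [this]
    simp [hμ₀.measure_univ]
  · calc (∫ u, Real.exp (-Φ u) ∂μ₀) ≤ ∫ _, (1:ℝ) ∂μ₀ :=
        integral_mono hfi (integrable_const 1) hfle
      _ = 1 := by simp [hμ₀.measure_univ]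
end

section
/- Two-term discretization error bound for the approximate exposure: let a < b, let ℓ : [a,b] → ℝ² be continuous, s ∈ ℝ², ρ > 0, let u : [a,b] → ℝ be continuous, and let 𝒦 : [0,∞) → (0,1] be nonincreasing. For M ≥ 1 set h = (b−a)/M, C_m = [a+(m−1)h, a+mh] with midpoint c̄_m = a + (2m−1)h/2, and write d(c) = ‖ℓ(c) − s‖. Then | ∑_{m=1}^M 𝒦(d(c̄_m)/ρ) e^{u(c̄_m)} h − ∫_a^b 𝒦(d(c)/ρ) e^{u(c)} dc | ≤ ∑_{m=1}^M [ 𝒦(d(c̄_m)/ρ) ∫_{C_m} |e^{u(c)} − e^{u(c̄_m)}| dc + ( 𝒦((min_{x ∈ C_m} d(x))/ρ) − 𝒦((max_{x ∈ C_m} d(x))/ρ) ) ∫_{C_m} e^{u(c)} dc ]. -/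
/-!
On a cell `C_m` with midpoint `c̄`, split
`K(d c̄/ρ) e^{u(c̄)} − K(d c/ρ) e^{u(c)} = K(d c̄/ρ) (e^{u(c̄)} − e^{u(c)}) + (K(d c̄/ρ) − K(d c/ρ)) e^{u(c)}`.
Both `d c̄` and `d c` lie between the minimum and the maximum of `d` on `C_m`, so, `K` being
antitone, the kernel difference is at most `K(min d/ρ) − K(max d/ρ)`. Integrating over `C_m`
and summing over the cells gives the bound.
-/

open MeasureTheory Set

lemma abs_mul_sub_mul_le_of_mem_Icc {k₀ k g₀ g lo hi : ℝ} (hk₀ : k₀ ∈ Icc lo hi)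
    (hk : k ∈ Icc lo hi) (hk₀_nonneg : 0 ≤ k₀) (hg : 0 ≤ g) :
    |k₀ * g₀ - k * g| ≤ k₀ * |g - g₀| + (hi - lo) * g := by
  have hk_sub : |k₀ - k| ≤ hi - lo :=
    abs_sub_le_iff.2 ⟨by linarith [hk₀.2, hk.1], by linarith [hk.2, hk₀.1]⟩
  calc |k₀ * g₀ - k * g| = |k₀ * (g₀ - g) + (k₀ - k) * g| :=
      congrArg abs (by ring)
    _ ≤ |k₀ * (g₀ - g)| + |(k₀ - k) * g| := abs_add_le _ _
    _ = k₀ * |g - g₀| + |k₀ - k| * g := by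
      rw [abs_mul, abs_mul, abs_of_nonneg hk₀_nonneg, abs_of_nonneg hg, abs_sub_comm]
    _ ≤ k₀ * |g - g₀| + (hi - lo) * g := by gcongr

lemma abs_mul_sub_integral_mul_le {k g : ℝ → ℝ} {p q x₀ lo hi : ℝ} (hpq : p ≤ q)
    (hx₀ : x₀ ∈ Icc p q) (hk : ∀ x ∈ Icc p q, k x ∈ Icc lo hi) (hk₀ : 0 ≤ k x₀)
    (hg_nonneg : ∀ x ∈ Icc p q, 0 ≤ g x)
    (hkg : IntervalIntegrable (fun x => k x * g x) volume p q)
    (hg : IntervalIntegrable g volume p q) :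
    |k x₀ * g x₀ * (q - p) - ∫ x in p..q, k x * g x| ≤
      k x₀ * (∫ x in p..q, |g x - g x₀|) + (hi - lo) * ∫ x in p..q, g x := by
  have hdev : IntervalIntegrable (fun x => |g x - g x₀|) volume p q :=
    (hg.sub intervalIntegrable_const).abs
  calc |k x₀ * g x₀ * (q - p) - ∫ x in p..q, k x * g x|
      = |∫ x in p..q, (k x₀ * g x₀ - k x * g x)| := by
        rw [intervalIntegral.integral_sub intervalIntegrable_const hkg,
          intervalIntegral.integral_const, smul_eq_mul, mul_comm (q - p)]
    _ ≤ ∫ x in p..q, |k x₀ * g x₀ - k x * g x| :=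
        intervalIntegral.abs_integral_le_integral_abs hpq
    _ ≤ ∫ x in p..q, (k x₀ * |g x - g x₀| + (hi - lo) * g x) :=
        intervalIntegral.integral_mono_on hpq (intervalIntegrable_const.sub hkg).abs
          ((hdev.const_mul _).add (hg.const_mul _)) fun x hx =>
            abs_mul_sub_mul_le_of_mem_Icc (hk x₀ hx₀) (hk x hx) hk₀ (hg_nonneg x hx)
    _ = k x₀ * (∫ x in p..q, |g x - g x₀|) + (hi - lo) * ∫ x in p..q, g x := by
        rw [intervalIntegral.integral_add (hdev.const_mul _) (hg.const_mul _),
          intervalIntegral.integral_const_mul, intervalIntegral.integral_const_mul]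

lemma AntitoneOn.apply_mem_Icc_sSup_sInf_image {α : Type*} {κ : ℝ → ℝ} {φ : α → ℝ} {S : Set α}
    (hκ : AntitoneOn κ (Ici 0)) (hφ : ∀ x ∈ S, 0 ≤ φ x) (hbdd : BddBelow (φ '' S))
    (hbdd' : BddAbove (φ '' S)) {x : α} (hx : x ∈ S) :
    κ (φ x) ∈ Icc (κ (sSup (φ '' S))) (κ (sInf (φ '' S))) := by
  have hinf : sInf (φ '' S) ≤ φ x := csInf_le hbdd (mem_image_of_mem φ hx)
  have hsup : φ x ≤ sSup (φ '' S) := le_csSup hbdd' (mem_image_of_mem φ hx)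
  have hinf_nonneg : 0 ≤ sInf (φ '' S) :=
    le_csInf ⟨φ x, mem_image_of_mem φ hx⟩ (forall_mem_image.2 hφ)
  exact ⟨hκ (hφ x hx) (hinf_nonneg.trans (hinf.trans hsup)) hsup,
    hκ hinf_nonneg (hφ x hx) hinf⟩

lemma AntitoneOn.aemeasurable_comp {α : Type*} [MeasurableSpace α] {μ : Measure α}
    {κ : ℝ → ℝ} {φ : α → ℝ} (hκ : AntitoneOn κ (Ici 0)) (hφ : AEMeasurable φ μ)
    (hφ_nonneg : ∀ x, 0 ≤ φ x) : AEMeasurable (fun x => κ (φ x)) μ := by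
  have hmax : Antitone fun y => κ (max y 0) := fun y z hyz =>
    hκ (le_max_right y 0) (le_max_right z 0) (max_le_max_right 0 hyz)
  have hcomp : (fun x => κ (φ x)) = (fun y => κ (max y 0)) ∘ φ := by
    funext x
    simp only [Function.comp_apply, max_eq_left (hφ_nonneg x)]
  exact hcomp ▸ hmax.measurable.comp_aemeasurable hφ

lemma intervalIntegrable_comp_mul_of_antitoneOn {κ d g : ℝ → ℝ} {p q : ℝ} (hpq : p ≤ q)
    (hκ : AntitoneOn κ (Ici 0)) (hd : ContinuousOn d (Icc p q)) (hd_nonneg : ∀ x, 0 ≤ d x)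
    (hg : ContinuousOn g (Icc p q)) :
    IntervalIntegrable (fun x => κ (d x) * g x) volume p q := by
  have hcpt : IsCompact (d '' Icc p q) := isCompact_Icc.image_of_continuousOn hd
  rw [intervalIntegrable_iff_integrableOn_Icc_of_le hpq]
  refine hg.integrableOn_Icc.bdd_mul
    (c := max |κ (sSup (d '' Icc p q))| |κ (sInf (d '' Icc p q))|)
    (hκ.aemeasurable_comp (hd.aemeasurable measurableSet_Icc) hd_nonneg).aestronglyMeasurable
    ((ae_restrict_iff' measurableSet_Icc).2 (Filter.Eventually.of_forall fun x hx => ?_))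
  have hx := hκ.apply_mem_Icc_sSup_sInf_image (fun x _ => hd_nonneg x) hcpt.bddBelow
    hcpt.bddAbove hx
  exact abs_le_max_abs_abs hx.1 hx.2

lemma abs_mul_sub_integral_comp_mul_le {κ d g : ℝ → ℝ} {p q x₀ : ℝ} (hpq : p ≤ q)
    (hx₀ : x₀ ∈ Icc p q) (hκ : AntitoneOn κ (Ici 0)) (hκ_nonneg : ∀ y, 0 ≤ y → 0 ≤ κ y)
    (hd : ContinuousOn d (Icc p q)) (hd_nonneg : ∀ x, 0 ≤ d x)
    (hg : ContinuousOn g (Icc p q)) (hg_nonneg : ∀ x ∈ Icc p q, 0 ≤ g x) :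
    |κ (d x₀) * g x₀ * (q - p) - ∫ x in p..q, κ (d x) * g x| ≤
      κ (d x₀) * (∫ x in p..q, |g x - g x₀|) +
        (κ (sInf (d '' Icc p q)) - κ (sSup (d '' Icc p q))) * ∫ x in p..q, g x := by
  have hcpt : IsCompact (d '' Icc p q) := isCompact_Icc.image_of_continuousOn hd
  exact abs_mul_sub_integral_mul_le hpq hx₀
    (fun x hx => hκ.apply_mem_Icc_sSup_sInf_image (fun x _ => hd_nonneg x) hcpt.bddBelow
      hcpt.bddAbove hx)
    (hκ_nonneg _ (hd_nonneg x₀)) hg_nonneg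
    (intervalIntegrable_comp_mul_of_antitoneOn hpq hκ hd hd_nonneg hg)
    (hg.intervalIntegrable_of_Icc hpq)

lemma integral_eq_sum_integral_uniform_cells {E : Type*} [NormedAddCommGroup E]
    [NormedSpace ℝ E] (f : ℝ → E) (a h : ℝ) (M : ℕ)
    (hf : ∀ m ∈ Finset.Icc 1 M,
      IntervalIntegrable f volume (a + ((m : ℝ) - 1) * h) (a + m * h)) :
    ∫ x in a..a + M * h, f x =
      ∑ m ∈ Finset.Icc 1 M, ∫ x in (a + ((m : ℝ) - 1) * h)..(a + m * h), f x := by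
  have hadj := intervalIntegral.sum_integral_adjacent_intervals (a := fun k : ℕ => a + k * h)
    (μ := volume) (f := f) (n := M) fun k hk => by
      simpa using hf (k + 1) (Finset.mem_Icc.2 ⟨k.succ_pos, hk⟩)
  simp only [Nat.cast_zero, zero_mul, add_zero] at hadj
  rw [← hadj, ← Finset.Ico_add_one_right_eq_Icc, Finset.sum_Ico_eq_sum_range,
    add_tsub_cancel_right]
  refine Finset.sum_congr rfl fun k _ => ?_
  congr 1 <;> push_cast <;> ring

lemma Icc_uniform_cell_subset {a h : ℝ} (hh : 0 ≤ h) {m M : ℕ} (hm : m ∈ Finset.Icc 1 M) :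
    Icc (a + ((m : ℝ) - 1) * h) (a + m * h) ⊆ Icc a (a + M * h) := by
  obtain ⟨h1m, hmM⟩ := Finset.mem_Icc.1 hm
  have h1m' : (1 : ℝ) ≤ m := by exact_mod_cast h1m
  have hmM' : (m : ℝ) ≤ M := by exact_mod_cast hmM
  exact Icc_subset_Icc (by nlinarith) (by nlinarith)

/-- Two-term discretization error bound for the approximate exposure: for a nonincreasing
kernel `𝒦 : [0,∞) → (0,1]`, a continuous curve `ℓ`, a continuous `u`, and the uniform
partition of `[a,b]` into `M` intervals `C_m` with midpoints `c̄_m` and width `h = (b−a)/M`,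
`|∑_m 𝒦(d(c̄_m)/ρ) e^{u(c̄_m)} h − ∫_a^b 𝒦(d(c)/ρ) e^{u(c)} dc|`
is at most
`∑_m [𝒦(d(c̄_m)/ρ) ∫_{C_m} |e^{u(c)} − e^{u(c̄_m)}| dc
  + (𝒦(min_{C_m} d / ρ) − 𝒦(max_{C_m} d / ρ)) ∫_{C_m} e^{u(c)} dc]`,
where `d(c) = ‖ℓ(c) − s‖`. -/
theorem exposure_discretization_two_term_bound (a b : ℝ) (hab : a < b)
    (ℓ : ℝ → EuclideanSpace ℝ (Fin 2)) (hℓ : ContinuousOn ℓ (Set.Icc a b))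
    (s : EuclideanSpace ℝ (Fin 2)) (ρ : ℝ) (hρ : 0 < ρ)
    (u : ℝ → ℝ) (hu : ContinuousOn u (Set.Icc a b))
    (K : ℝ → ℝ) (hKmono : AntitoneOn K (Set.Ici 0))
    (hKrange : ∀ x : ℝ, 0 ≤ x → K x ∈ Set.Ioc (0 : ℝ) 1)
    (M : ℕ) (hM : 1 ≤ M) :
    |(∑ m ∈ Finset.Icc 1 M,
        K (‖ℓ (a + (2 * (m : ℝ) - 1) * ((b - a) / M) / 2) - s‖ / ρ) *
          Real.exp (u (a + (2 * (m : ℝ) - 1) * ((b - a) / M) / 2)) * ((b - a) / M)) -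
      ∫ c in a..b, K (‖ℓ c - s‖ / ρ) * Real.exp (u c)| ≤
    ∑ m ∈ Finset.Icc 1 M,
      (K (‖ℓ (a + (2 * (m : ℝ) - 1) * ((b - a) / M) / 2) - s‖ / ρ) *
          (∫ c in (a + ((m : ℝ) - 1) * ((b - a) / M))..(a + (m : ℝ) * ((b - a) / M)),
            |Real.exp (u c) -
              Real.exp (u (a + (2 * (m : ℝ) - 1) * ((b - a) / M) / 2))|) +
        (K (sInf ((fun c => ‖ℓ c - s‖) ''
              Set.Icc (a + ((m : ℝ) - 1) * ((b - a) / M))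
                (a + (m : ℝ) * ((b - a) / M))) / ρ) -
          K (sSup ((fun c => ‖ℓ c - s‖) ''
              Set.Icc (a + ((m : ℝ) - 1) * ((b - a) / M))
                (a + (m : ℝ) * ((b - a) / M))) / ρ)) *
          ∫ c in (a + ((m : ℝ) - 1) * ((b - a) / M))..(a + (m : ℝ) * ((b - a) / M)),
            Real.exp (u c)) := by
  set h : ℝ := (b - a) / M with h_def
  have hh : 0 ≤ h := div_nonneg (sub_nonneg.2 hab.le) M.cast_nonneg
  have hb : a + M * h = b := by
    rw [h_def, mul_div_cancel₀ _ (Nat.cast_ne_zero.2 (by omega))]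
    ring
  have hκ : AntitoneOn (fun x => K (x / ρ)) (Ici 0) := fun x hx y hy hxy =>
    hKmono (div_nonneg hx hρ.le) (div_nonneg hy hρ.le) (by gcongr)
  have hκ_nonneg : ∀ x, 0 ≤ x → 0 ≤ K (x / ρ) := fun x hx =>
    (hKrange _ (div_nonneg hx hρ.le)).1.le
  have hd : ContinuousOn (fun c => ‖ℓ c - s‖) (Icc a b) := (hℓ.sub continuousOn_const).norm
  have hexp : ContinuousOn (fun c => Real.exp (u c)) (Icc a b) :=
    Real.continuous_exp.comp_continuousOn hu
  have hcell : ∀ m ∈ Finset.Icc 1 M, Icc (a + ((m : ℝ) - 1) * h) (a + m * h) ⊆ Icc a b :=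
    fun m hm => hb ▸ Icc_uniform_cell_subset hh hm
  have hcell_le : ∀ m : ℕ, a + ((m : ℝ) - 1) * h ≤ a + m * h := fun m => by linarith
  rw [← hb, integral_eq_sum_integral_uniform_cells _ a h M fun m hm =>
      intervalIntegrable_comp_mul_of_antitoneOn (hcell_le m) hκ (hd.mono (hcell m hm))
        (fun _ => norm_nonneg _) (hexp.mono (hcell m hm)),
    ← Finset.sum_sub_distrib]
  refine (Finset.abs_sum_le_sum_abs _ _).trans (Finset.sum_le_sum fun m hm => ?_)
  have hmid : a + (2 * (m : ℝ) - 1) * h / 2 ∈ Icc (a + ((m : ℝ) - 1) * h) (a + m * h) :=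
    ⟨by linarith, by linarith⟩
  have := abs_mul_sub_integral_comp_mul_le (hcell_le m) hmid hκ hκ_nonneg
    (hd.mono (hcell m hm)) (fun _ => norm_nonneg _) (hexp.mono (hcell m hm))
    (fun _ _ => (Real.exp_pos _).le)
  rwa [show a + m * h - (a + ((m : ℝ) - 1) * h) = h by ring] at this
end

section
/- Hellinger stability of Gibbs posteriors: let (Ω, 𝓕, μ₀) be a probability space, let Φ₁, Φ₂ : Ω → [0,∞) be measurable with ∫ (Φ₁ − Φ₂)² dμ₀ < ∞, let Z_i = ∫ e^{−Φ_i} dμ₀, and suppose Z₁, Z₂ ≥ z for some 0 < z ≤ 1. Define the posterior densities p_i = e^{−Φ_i}/Z_i with respect to μ₀. Then ∫_Ω ( √(p₁) − √(p₂) )² dμ₀ ≤ z^{−3} ∫_Ω (Φ₁ − Φ₂)² dμ₀. -/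
/-!
With `f = √(e^{-Φ₁})`, `g = √(e^{-Φ₂})` one has `‖f‖₂² = Z₁`, `‖g‖₂² = Z₂`, and the Hellinger
integral is `‖f/‖f‖₂ - g/‖g‖₂‖₂²`. In any `L²`,
`‖f - g‖₂² = ‖f‖₂ ‖g‖₂ ‖f/‖f‖₂ - g/‖g‖₂‖₂² + (‖f‖₂ - ‖g‖₂)²`, so the Hellinger integral is at
most `‖f - g‖₂² / √(Z₁ Z₂) ≤ ‖f - g‖₂² / z`. Since `t ↦ e^{-t/2}` is `1/2`-Lipschitz on
`[0, ∞)`, `‖f - g‖₂² ≤ ‖Φ₁ - Φ₂‖₂² / 4`, and `1 / (4z) ≤ z⁻³` for `z ≤ 1`.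
-/

open MeasureTheory

theorem Real.abs_exp_neg_sub_exp_neg_le {x y : ℝ} (hx : 0 ≤ x) (hy : 0 ≤ y) :
    |Real.exp (-x) - Real.exp (-y)| ≤ |x - y| := by
  wlog hxy : x ≤ y generalizing x y
  · rw [abs_sub_comm, abs_sub_comm x]
    exact this hy hx (le_of_not_ge hxy)
  have hexp : Real.exp (-y) = Real.exp (-x) * Real.exp (-(y - x)) := by
    rw [← Real.exp_add]; ring_nf
  have hgap : 0 ≤ 1 - Real.exp (-(y - x)) := by
    rw [sub_nonneg]; exact Real.exp_le_one_iff.mpr (by linarith)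
  have hexp_x : Real.exp (-x) ≤ 1 := Real.exp_le_one_iff.mpr (by linarith)
  calc |Real.exp (-x) - Real.exp (-y)| = Real.exp (-x) * (1 - Real.exp (-(y - x))) := by
        rw [hexp, ← mul_one_sub, abs_of_nonneg (mul_nonneg (Real.exp_nonneg _) hgap)]
    _ ≤ 1 - Real.exp (-(y - x)) := mul_le_of_le_one_left hgap hexp_x
    _ ≤ y - x := by linarith [Real.one_sub_le_exp_neg (y - x)]
    _ = |x - y| := by rw [abs_sub_comm, abs_of_nonneg (by linarith)]

theorem Real.sq_sqrt_exp_neg_sub_sqrt_exp_neg_le {x y : ℝ} (hx : 0 ≤ x) (hy : 0 ≤ y) :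
    (√(Real.exp (-x)) - √(Real.exp (-y))) ^ 2 ≤ (x - y) ^ 2 / 4 := by
  rw [← Real.exp_half, ← Real.exp_half, neg_div, neg_div]
  calc (Real.exp (-(x / 2)) - Real.exp (-(y / 2))) ^ 2 ≤ (x / 2 - y / 2) ^ 2 :=
        sq_le_sq.mpr (Real.abs_exp_neg_sub_exp_neg_le (by positivity) (by positivity))
    _ = (x - y) ^ 2 / 4 := by ring

section Integrals

variable {Ω : Type*} [MeasurableSpace Ω] {μ : Measure Ω}

theorem integral_sq_mul_sub_mul {f g : Ω → ℝ} (hf : MemLp f 2 μ) (hg : MemLp g 2 μ) (a b : ℝ) :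
    ∫ x, (a * f x - b * g x) ^ 2 ∂μ =
      a ^ 2 * ∫ x, f x ^ 2 ∂μ + b ^ 2 * ∫ x, g x ^ 2 ∂μ - 2 * a * b * ∫ x, f x * g x ∂μ := by
  have hf2 : Integrable (fun x => a ^ 2 * f x ^ 2) μ := hf.integrable_sq.const_mul _
  have hg2 : Integrable (fun x => b ^ 2 * g x ^ 2) μ := hg.integrable_sq.const_mul _
  have hfg : Integrable (fun x => 2 * a * b * (f x * g x)) μ :=
    (hf.integrable_mul hg).const_mul _
  have hexpand : (fun x => (a * f x - b * g x) ^ 2) =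
      fun x => a ^ 2 * f x ^ 2 + b ^ 2 * g x ^ 2 - 2 * a * b * (f x * g x) := by
    ext x; ring
  have hsum : Integrable (fun x => a ^ 2 * f x ^ 2 + b ^ 2 * g x ^ 2) μ := hf2.add hg2
  rw [hexpand, integral_sub hsum hfg, integral_add hf2 hg2,
    integral_const_mul, integral_const_mul, integral_const_mul]

theorem mul_integral_sq_div_sqrt_sub_div_sqrt_le {f g : Ω → ℝ}
    (hf : MemLp f 2 μ) (hg : MemLp g 2 μ) :
    √(∫ x, f x ^ 2 ∂μ) * √(∫ x, g x ^ 2 ∂μ) *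
        ∫ x, (f x / √(∫ y, f y ^ 2 ∂μ) - g x / √(∫ y, g y ^ 2 ∂μ)) ^ 2 ∂μ ≤
      ∫ x, (f x - g x) ^ 2 ∂μ := by
  set A := √(∫ x, f x ^ 2 ∂μ)
  set B := √(∫ x, g x ^ 2 ∂μ)
  have hS : 0 ≤ ∫ x, (f x - g x) ^ 2 ∂μ := integral_nonneg fun _ => sq_nonneg _
  rcases (show 0 ≤ A from Real.sqrt_nonneg _).eq_or_lt with hA | hA
  · rw [← hA, zero_mul, zero_mul]; exact hS
  rcases (show 0 ≤ B from Real.sqrt_nonneg _).eq_or_lt with hB | hB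
  · rw [← hB, mul_zero, zero_mul]; exact hS
  have hA2 : A ^ 2 = ∫ x, f x ^ 2 ∂μ := Real.sq_sqrt (integral_nonneg fun _ => sq_nonneg _)
  have hB2 : B ^ 2 = ∫ x, g x ^ 2 ∂μ := Real.sq_sqrt (integral_nonneg fun _ => sq_nonneg _)
  have hnormalized := integral_sq_mul_sub_mul hf hg A⁻¹ B⁻¹
  have hdiff := integral_sq_mul_sub_mul hf hg 1 1
  simp only [inv_mul_eq_div, one_mul, one_pow, mul_one] at hnormalized hdiff
  rw [hnormalized, hdiff, ← hA2, ← hB2]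
  field_simp [hA.ne', hB.ne']
  nlinarith [sq_nonneg (A - B)]

theorem memLp_sqrt_exp_neg [IsFiniteMeasure μ] {Φ : Ω → ℝ} (hΦm : Measurable Φ)
    (hΦ : ∀ x, 0 ≤ Φ x) (p : ENNReal) :
    MemLp (fun x => √(Real.exp (-Φ x))) p μ := by
  refine MemLp.of_bound (by fun_prop) 1 (ae_of_all _ fun x => ?_)
  rw [Real.norm_of_nonneg (Real.sqrt_nonneg _)]
  exact Real.sqrt_le_one.mpr (Real.exp_le_one_iff.mpr (neg_nonpos.mpr (hΦ x)))

theorem integral_sq_sqrt_exp_neg_sub_sqrt_exp_neg_le [IsFiniteMeasure μ] {Φ₁ Φ₂ : Ω → ℝ}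
    (hΦ₁m : Measurable Φ₁) (hΦ₂m : Measurable Φ₂) (hΦ₁ : ∀ x, 0 ≤ Φ₁ x) (hΦ₂ : ∀ x, 0 ≤ Φ₂ x)
    (hsq : Integrable (fun x => (Φ₁ x - Φ₂ x) ^ 2) μ) :
    ∫ x, (√(Real.exp (-Φ₁ x)) - √(Real.exp (-Φ₂ x))) ^ 2 ∂μ ≤
      (∫ x, (Φ₁ x - Φ₂ x) ^ 2 ∂μ) / 4 := by
  rw [← integral_div]
  exact integral_mono ((memLp_sqrt_exp_neg hΦ₁m hΦ₁ 2).sub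
    (memLp_sqrt_exp_neg hΦ₂m hΦ₂ 2)).integrable_sq (hsq.div_const 4)
    fun x => Real.sq_sqrt_exp_neg_sub_sqrt_exp_neg_le (hΦ₁ x) (hΦ₂ x)

end Integrals

/-- Hellinger stability of Gibbs posteriors: for measurable `Φ₁, Φ₂ : Ω → [0,∞)` with
`∫(Φ₁ − Φ₂)² dμ₀ < ∞` and normalizing constants `Z_i = ∫ e^{−Φ_i} dμ₀ ≥ z > 0`, the
posterior densities `p_i = e^{−Φ_i}/Z_i` satisfy
`∫ (√p₁ − √p₂)² dμ₀ ≤ z^{−3} ∫ (Φ₁ − Φ₂)² dμ₀`. -/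
theorem gibbs_posterior_hellinger_stability {Ω : Type*} [MeasurableSpace Ω]
    (μ₀ : Measure Ω) [IsProbabilityMeasure μ₀]
    (Φ₁ Φ₂ : Ω → ℝ) (hΦ₁m : Measurable Φ₁) (hΦ₂m : Measurable Φ₂)
    (hΦ₁ : ∀ x, 0 ≤ Φ₁ x) (hΦ₂ : ∀ x, 0 ≤ Φ₂ x)
    (hsq : Integrable (fun x => (Φ₁ x - Φ₂ x) ^ 2) μ₀)
    (z : ℝ) (hz0 : 0 < z) (hz1 : z ≤ 1)
    (hZ₁ : z ≤ ∫ x, Real.exp (-Φ₁ x) ∂μ₀)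
    (hZ₂ : z ≤ ∫ x, Real.exp (-Φ₂ x) ∂μ₀) :
    (∫ x,
        (Real.sqrt (Real.exp (-Φ₁ x) / ∫ y, Real.exp (-Φ₁ y) ∂μ₀) -
          Real.sqrt (Real.exp (-Φ₂ x) / ∫ y, Real.exp (-Φ₂ y) ∂μ₀)) ^ 2 ∂μ₀) ≤
      z⁻¹ ^ 3 * ∫ x, (Φ₁ x - Φ₂ x) ^ 2 ∂μ₀ := by
  have hf := memLp_sqrt_exp_neg (μ := μ₀) hΦ₁m hΦ₁ 2
  have hg := memLp_sqrt_exp_neg (μ := μ₀) hΦ₂m hΦ₂ 2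
  have hcompare := mul_integral_sq_div_sqrt_sub_div_sqrt_le hf hg
  simp only [Real.sq_sqrt (Real.exp_nonneg _)] at hcompare
  simp only [Real.sqrt_div (Real.exp_nonneg _)]
  set H := ∫ x, (√(Real.exp (-Φ₁ x)) / √(∫ y, Real.exp (-Φ₁ y) ∂μ₀) -
    √(Real.exp (-Φ₂ x)) / √(∫ y, Real.exp (-Φ₂ y) ∂μ₀)) ^ 2 ∂μ₀
  have hdist := integral_sq_sqrt_exp_neg_sub_sqrt_exp_neg_le hΦ₁m hΦ₂m hΦ₁ hΦ₂ hsq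
  have hz : z ≤ √(∫ x, Real.exp (-Φ₁ x) ∂μ₀) * √(∫ x, Real.exp (-Φ₂ x) ∂μ₀) :=
    calc z = √z * √z := (Real.mul_self_sqrt hz0.le).symm
      _ ≤ _ := mul_le_mul (Real.sqrt_le_sqrt hZ₁) (Real.sqrt_le_sqrt hZ₂)
          (Real.sqrt_nonneg _) (Real.sqrt_nonneg _)
  have hH : 0 ≤ H := integral_nonneg fun _ => sq_nonneg _
  calc H ≤ (∫ x, (Φ₁ x - Φ₂ x) ^ 2 ∂μ₀) / 4 / z := by
        rw [le_div_iff₀ hz0, mul_comm]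
        exact (mul_le_mul_of_nonneg_right hz hH).trans (hcompare.trans hdist)
    _ ≤ (∫ x, (Φ₁ x - Φ₂ x) ^ 2 ∂μ₀) / z ^ 3 := by
        rw [div_div]
        gcongr
        nlinarith [pow_le_one₀ hz0.le hz1 (n := 2)]
    _ = z⁻¹ ^ 3 * ∫ x, (Φ₁ x - Φ₂ x) ^ 2 ∂μ₀ := by rw [inv_pow, inv_mul_eq_div]
end

section
/- Hellinger control of differences of expectations: let (Ω, 𝓕, μ₀) be a probability space, let p, q : Ω → [0,∞) be measurable with ∫ p dμ₀ = ∫ q dμ₀ = 1, and let f : Ω → ℝ be measurable with ∫ f² p dμ₀ < ∞ and ∫ f² q dμ₀ < ∞. Then | ∫ f p dμ₀ − ∫ f q dμ₀ | ≤ √2 · ( ∫ f² p dμ₀ + ∫ f² q dμ₀ )^{1/2} · ( ∫ (√p − √q)² dμ₀ )^{1/2}. -/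
/-!
Write `f p - f q = g h` with `g = f (√p + √q)` and `h = √p - √q`. Cauchy–Schwarz bounds
`|∫ g h|` by `‖g‖₂ ‖h‖₂`, and `(√p + √q)² ≤ 2 (p + q)` gives `‖g‖₂² ≤ 2 (∫ f² p + ∫ f² q)`.
-/

open MeasureTheory

section Pointwise

variable {a b : ℝ}

lemma sq_sqrt_sub_sqrt_le (ha : 0 ≤ a) (hb : 0 ≤ b) : (√a - √b) ^ 2 ≤ a + b := by
  nlinarith [Real.sq_sqrt ha, Real.sq_sqrt hb, Real.sqrt_nonneg a, Real.sqrt_nonneg b]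

lemma sq_mul_sqrt_add_sqrt_le (c : ℝ) (ha : 0 ≤ a) (hb : 0 ≤ b) :
    (c * (√a + √b)) ^ 2 ≤ 2 * (c ^ 2 * a + c ^ 2 * b) := by
  rw [mul_pow]
  have := mul_le_mul_of_nonneg_left (add_sq_le (a := √a) (b := √b)) (sq_nonneg c)
  rw [Real.sq_sqrt ha, Real.sq_sqrt hb] at this
  linarith

lemma mul_sqrt_add_sqrt_mul_sqrt_sub_sqrt (c : ℝ) (ha : 0 ≤ a) (hb : 0 ≤ b) :
    c * (√a + √b) * (√a - √b) = c * a - c * b := by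
  linear_combination c * Real.sq_sqrt ha - c * Real.sq_sqrt hb

lemma abs_mul_le_sq_mul_add_div_two (c : ℝ) (ha : 0 ≤ a) : |c * a| ≤ (c ^ 2 * a + a) / 2 := by
  rw [abs_mul, abs_of_nonneg ha]
  nlinarith [two_mul_le_add_sq |c| 1, sq_abs c]

end Pointwise

section Integral

variable {α : Type*} [MeasurableSpace α] {μ : Measure α} {f p q : α → ℝ}

theorem abs_integral_mul_le_sqrt_integral_sq_mul_sqrt_integral_sq {g : α → ℝ}
    (hf : MemLp f 2 μ) (hg : MemLp g 2 μ) :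
    |∫ x, f x * g x ∂μ| ≤ √(∫ x, f x ^ 2 ∂μ) * √(∫ x, g x ^ 2 ∂μ) := by
  have hnorm_rpow : ∀ y : ℝ, ‖y‖ ^ (2 : ℝ) = y ^ 2 := fun y => by
    rw [Real.rpow_two, Real.norm_eq_abs, sq_abs]
  rw [← ENNReal.ofReal_ofNat] at hf hg
  calc |∫ x, f x * g x ∂μ| ≤ ∫ x, ‖f x‖ * ‖g x‖ ∂μ := by
        simpa only [Real.norm_eq_abs, norm_mul] using
          norm_integral_le_integral_norm (fun x => f x * g x)
    _ ≤ (∫ x, ‖f x‖ ^ (2 : ℝ) ∂μ) ^ (1 / 2 : ℝ) * (∫ x, ‖g x‖ ^ (2 : ℝ) ∂μ) ^ (1 / 2 : ℝ) :=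
        integral_mul_norm_le_Lp_mul_Lq Real.HolderConjugate.two_two hf hg
    _ = √(∫ x, f x ^ 2 ∂μ) * √(∫ x, g x ^ 2 ∂μ) := by
        simp only [hnorm_rpow, Real.sqrt_eq_rpow]

theorem MeasureTheory.Integrable.mul_of_integrable_sq_mul (hf : AEStronglyMeasurable f μ)
    (hp : Integrable p μ) (hp0 : 0 ≤ᵐ[μ] p) (hfp : Integrable (fun x => f x ^ 2 * p x) μ) :
    Integrable (fun x => f x * p x) μ := by
  refine ((hfp.add hp).div_const 2).mono' (hf.mul hp.1) ?_
  filter_upwards [hp0] with x hx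
  exact abs_mul_le_sq_mul_add_div_two (f x) hx

theorem memLp_two_sqrt_sub_sqrt (hp : Integrable p μ) (hq : Integrable q μ)
    (hp0 : 0 ≤ᵐ[μ] p) (hq0 : 0 ≤ᵐ[μ] q) : MemLp (fun x => √(p x) - √(q x)) 2 μ := by
  have hm : AEStronglyMeasurable (fun x => √(p x) - √(q x)) μ :=
    (Real.continuous_sqrt.comp_aestronglyMeasurable hp.1).sub
      (Real.continuous_sqrt.comp_aestronglyMeasurable hq.1)
  refine (memLp_two_iff_integrable_sq hm).2 ((hp.add hq).mono' (hm.pow 2) ?_)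
  filter_upwards [hp0, hq0] with x hpx hqx
  rw [Real.norm_of_nonneg (sq_nonneg _)]
  exact sq_sqrt_sub_sqrt_le hpx hqx

theorem memLp_two_mul_sqrt_add_sqrt (hf : AEStronglyMeasurable f μ)
    (hp : AEStronglyMeasurable p μ) (hq : AEStronglyMeasurable q μ)
    (hp0 : 0 ≤ᵐ[μ] p) (hq0 : 0 ≤ᵐ[μ] q)
    (hfp : Integrable (fun x => f x ^ 2 * p x) μ) (hfq : Integrable (fun x => f x ^ 2 * q x) μ) :
    MemLp (fun x => f x * (√(p x) + √(q x))) 2 μ := by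
  have hm : AEStronglyMeasurable (fun x => f x * (√(p x) + √(q x))) μ :=
    hf.mul ((Real.continuous_sqrt.comp_aestronglyMeasurable hp).add
      (Real.continuous_sqrt.comp_aestronglyMeasurable hq))
  refine (memLp_two_iff_integrable_sq hm).2 (((hfp.add hfq).const_mul 2).mono' (hm.pow 2) ?_)
  filter_upwards [hp0, hq0] with x hpx hqx
  rw [Real.norm_of_nonneg (sq_nonneg _)]
  exact sq_mul_sqrt_add_sqrt_le (f x) hpx hqx

theorem integral_sq_mul_sqrt_add_sqrt_le (hp0 : 0 ≤ᵐ[μ] p) (hq0 : 0 ≤ᵐ[μ] q)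
    (hfp : Integrable (fun x => f x ^ 2 * p x) μ) (hfq : Integrable (fun x => f x ^ 2 * q x) μ) :
    ∫ x, (f x * (√(p x) + √(q x))) ^ 2 ∂μ ≤
      2 * ((∫ x, f x ^ 2 * p x ∂μ) + ∫ x, f x ^ 2 * q x ∂μ) := by
  rw [← integral_add hfp hfq, ← integral_const_mul]
  refine integral_mono_of_nonneg (ae_of_all _ fun x => sq_nonneg _)
    ((hfp.add hfq).const_mul 2) ?_
  filter_upwards [hp0, hq0] with x hpx hqx
  exact sq_mul_sqrt_add_sqrt_le (f x) hpx hqx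

end Integral

theorem hellinger_controls_expectation_difference_general {Ω : Type*} [MeasurableSpace Ω]
    (μ₀ : Measure Ω)
    (p q : Ω → ℝ)
    (hp0 : ∀ x, 0 ≤ p x) (hq0 : ∀ x, 0 ≤ q x)
    (hp1 : (∫ x, p x ∂μ₀) = 1) (hq1 : (∫ x, q x ∂μ₀) = 1)
    (f : Ω → ℝ) (hfm : Measurable f)
    (hfp : Integrable (fun x => f x ^ 2 * p x) μ₀)
    (hfq : Integrable (fun x => f x ^ 2 * q x) μ₀) :
    |(∫ x, f x * p x ∂μ₀) - ∫ x, f x * q x ∂μ₀| ≤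
      Real.sqrt 2 *
        Real.sqrt ((∫ x, f x ^ 2 * p x ∂μ₀) + ∫ x, f x ^ 2 * q x ∂μ₀) *
        Real.sqrt (∫ x, (Real.sqrt (p x) - Real.sqrt (q x)) ^ 2 ∂μ₀) := by
  have hp : Integrable p μ₀ := .of_integral_ne_zero (by simp [hp1])
  have hq : Integrable q μ₀ := .of_integral_ne_zero (by simp [hq1])
  have hp0' : 0 ≤ᵐ[μ₀] p := ae_of_all _ hp0
  have hq0' : 0 ≤ᵐ[μ₀] q := ae_of_all _ hq0
  calc |(∫ x, f x * p x ∂μ₀) - ∫ x, f x * q x ∂μ₀|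
      = |∫ x, f x * (√(p x) + √(q x)) * (√(p x) - √(q x)) ∂μ₀| := by
        rw [← integral_sub (hp.mul_of_integrable_sq_mul hfm.aestronglyMeasurable hp0' hfp)
          (hq.mul_of_integrable_sq_mul hfm.aestronglyMeasurable hq0' hfq)]
        simp only [mul_sqrt_add_sqrt_mul_sqrt_sub_sqrt _ (hp0 _) (hq0 _)]
    _ ≤ √(∫ x, (f x * (√(p x) + √(q x))) ^ 2 ∂μ₀) * √(∫ x, (√(p x) - √(q x)) ^ 2 ∂μ₀) :=
        abs_integral_mul_le_sqrt_integral_sq_mul_sqrt_integral_sq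
          (memLp_two_mul_sqrt_add_sqrt hfm.aestronglyMeasurable hp.1 hq.1 hp0' hq0' hfp hfq)
          (memLp_two_sqrt_sub_sqrt hp hq hp0' hq0')
    _ ≤ √2 * √((∫ x, f x ^ 2 * p x ∂μ₀) + ∫ x, f x ^ 2 * q x ∂μ₀) *
          √(∫ x, (√(p x) - √(q x)) ^ 2 ∂μ₀) := by
        rw [← Real.sqrt_mul zero_le_two]
        gcongr
        exact integral_sq_mul_sqrt_add_sqrt_le hp0' hq0' hfp hfq

/-- Hellinger control of differences of expectations: for probability densities `p, q`
with respect to a probability measure `μ₀` and a measurable `f` with finite second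
moments `∫ f² p dμ₀` and `∫ f² q dμ₀`,
`|∫ f p dμ₀ − ∫ f q dμ₀| ≤ √2 (∫ f² p dμ₀ + ∫ f² q dμ₀)^{1/2} (∫ (√p − √q)² dμ₀)^{1/2}`. -/
theorem hellinger_controls_expectation_difference {Ω : Type*} [MeasurableSpace Ω]
    (μ₀ : Measure Ω) [IsProbabilityMeasure μ₀]
    (p q : Ω → ℝ) (hpm : Measurable p) (hqm : Measurable q)
    (hp0 : ∀ x, 0 ≤ p x) (hq0 : ∀ x, 0 ≤ q x)
    (hp1 : (∫ x, p x ∂μ₀) = 1) (hq1 : (∫ x, q x ∂μ₀) = 1)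
    (f : Ω → ℝ) (hfm : Measurable f)
    (hfp : Integrable (fun x => f x ^ 2 * p x) μ₀)
    (hfq : Integrable (fun x => f x ^ 2 * q x) μ₀) :
    |(∫ x, f x * p x ∂μ₀) - ∫ x, f x * q x ∂μ₀| ≤
      Real.sqrt 2 *
        Real.sqrt ((∫ x, f x ^ 2 * p x ∂μ₀) + ∫ x, f x ^ 2 * q x ∂μ₀) *
        Real.sqrt (∫ x, (Real.sqrt (p x) - Real.sqrt (q x)) ^ 2 ∂μ₀) :=
  hellinger_controls_expectation_difference_general μ₀ p q hp0 hq0 hp1 hq1 f hfm hfp hfq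
end

section
/- Abstract posterior moment stability (abstract form of the paper's Theorem 1): let (Ω, 𝓕, μ₀) be a probability space, let Φ₁, Φ₂ : Ω → [0,∞) be measurable, let Z_i = ∫ e^{−Φ_i} dμ₀ and suppose Z₁, Z₂ ≥ z for some 0 < z ≤ 1, and define posterior densities p_i = e^{−Φ_i}/Z_i with respect to μ₀. Let f : Ω → ℝ be measurable with ∫ f² p₁ dμ₀ ≤ B² and ∫ f² p₂ dμ₀ ≤ B² for some B ≥ 0. Then | ∫ f p₁ dμ₀ − ∫ f p₂ dμ₀ | ≤ 2 B z^{−3/2} ( ∫ (Φ₁ − Φ₂)² dμ₀ )^{1/2}. In particular, if ( ∫ (Φ₁ − Φ₂)² dμ₀ )^{1/2} ≤ C M^{−s} for some C ≥ 0, integer M ≥ 1, and s > 0, then the posterior expectations of f differ by at most 2 B z^{−3/2} C M^{−s}. -/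
/-!
Write `Z_i = ∫ e^{-Φ_i}` and `I_i = ∫ f e^{-Φ_i}`, so that the posterior means are
`E_i = I_i / Z_i` and `E₁ - E₂ = (I₁ - I₂ + E₂ (Z₂ - Z₁)) / Z₁`. Since `t ↦ e^{-t}` is
1-Lipschitz on `[0, ∞)`, `|Z₁ - Z₂| ≤ ‖Φ₁ - Φ₂‖₁ ≤ ‖Φ₁ - Φ₂‖₂`, and `|E₂| ≤ B` by Cauchy–Schwarz
against the posterior. For `I₁ - I₂`, factor through the half exponentials,
`|e^{-a} - e^{-b}| ≤ (e^{-a/2} + e^{-b/2}) / 2 · |a - b|`: Cauchy–Schwarz then bounds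
`∫ |f| e^{-Φ_i/2} |Φ₁ - Φ₂|` by `(∫ f² e^{-Φ_i})^{1/2} ‖Φ₁ - Φ₂‖₂ ≤ B ‖Φ₁ - Φ₂‖₂`, as `Z_i ≤ 1`.
Hence `|E₁ - E₂| ≤ 2 B ‖Φ₁ - Φ₂‖₂ / Z₁`, and `1 / Z₁ ≤ z^{-1} ≤ z^{-3/2}` since `z ≤ Z₁ ≤ 1`.
-/

open MeasureTheory Real

namespace Real

lemma exp_neg_half_sq (t : ℝ) : exp (-(t / 2)) ^ 2 = exp (-t) := by
  rw [← exp_nat_mul]; ring_nf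

lemma abs_exp_neg_sub_exp_neg_le_s19 {a b : ℝ} (ha : 0 ≤ a) (hb : 0 ≤ b) :
    |exp (-a) - exp (-b)| ≤ |a - b| := by
  wlog hab : a ≤ b generalizing a b
  · rw [abs_sub_comm, abs_sub_comm a]
    exact this hb ha (le_of_not_ge hab)
  have hmono : exp (-b) ≤ exp (-a) := exp_le_exp.2 (neg_le_neg hab)
  rw [abs_of_nonneg (sub_nonneg.2 hmono), abs_of_nonpos (sub_nonpos.2 hab)]
  calc exp (-a) - exp (-b) = exp (-a) * (1 - exp (a - b)) := by
        rw [mul_sub, mul_one, ← exp_add]; ring_nf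
    _ ≤ 1 * (b - a) :=
        mul_le_mul (exp_le_one_iff.2 (neg_nonpos.2 ha)) (by linarith [add_one_le_exp (a - b)])
          (sub_nonneg.2 (exp_le_one_iff.2 (sub_nonpos.2 hab))) zero_le_one
    _ = -(a - b) := by ring

lemma abs_exp_neg_sub_exp_neg_le_mul {a b : ℝ} (ha : 0 ≤ a) (hb : 0 ≤ b) :
    |exp (-a) - exp (-b)| ≤ (exp (-(a / 2)) + exp (-(b / 2))) / 2 * |a - b| := by
  have hhalf : |exp (-(a / 2)) - exp (-(b / 2))| ≤ |a - b| / 2 := by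
    have := abs_exp_neg_sub_exp_neg_le_s19 (by positivity : 0 ≤ a / 2) (by positivity : 0 ≤ b / 2)
    rwa [← sub_div, abs_div, abs_two] at this
  calc |exp (-a) - exp (-b)|
      = |exp (-(a / 2)) - exp (-(b / 2))| * (exp (-(a / 2)) + exp (-(b / 2))) := by
        rw [← exp_neg_half_sq a, ← exp_neg_half_sq b, sq_sub_sq, abs_mul,
          abs_of_pos (by positivity), mul_comm]
    _ ≤ |a - b| / 2 * (exp (-(a / 2)) + exp (-(b / 2))) := by gcongr
    _ = _ := by ring

end Real

section CauchySchwarz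

variable {α : Type*} [MeasurableSpace α] {μ : Measure α}

theorem integral_abs_mul_abs_le {u v : α → ℝ} (hu : MemLp u 2 μ) (hv : MemLp v 2 μ) :
    ∫ x, |u x| * |v x| ∂μ ≤ √(∫ x, u x ^ 2 ∂μ) * √(∫ x, v x ^ 2 ∂μ) := by
  have h := integral_mul_norm_le_Lp_mul_Lq (μ := μ) HolderConjugate.two_two
    (by simpa using hu) (by simpa using hv)
  simpa only [norm_eq_abs, rpow_two, sq_abs, ← sqrt_eq_rpow] using h

theorem integral_abs_le_sqrt_integral_sq [IsProbabilityMeasure μ] {u : α → ℝ}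
    (hu : MemLp u 2 μ) : ∫ x, |u x| ∂μ ≤ √(∫ x, u x ^ 2 ∂μ) := by
  simpa using integral_abs_mul_abs_le hu (memLp_const (1 : ℝ))

theorem abs_integral_mul_le_sqrt {f w : α → ℝ} (hfm : AEStronglyMeasurable f μ)
    (hw0 : 0 ≤ w) (hw : Integrable w μ) (hfw : Integrable (fun x => f x ^ 2 * w x) μ) :
    |∫ x, f x * w x ∂μ| ≤ √(∫ x, f x ^ 2 * w x ∂μ) * √(∫ x, w x ∂μ) := by
  have hsqrt : ∀ x, √(w x) ^ 2 = w x := fun x => sq_sqrt (hw0 x)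
  have hwm : AEStronglyMeasurable (fun x => √(w x)) μ :=
    continuous_sqrt.comp_aestronglyMeasurable hw.1
  have hu : MemLp (fun x => f x * √(w x)) 2 μ := by
    refine (memLp_two_iff_integrable_sq (hfm.mul hwm)).2 ?_
    simpa only [Pi.mul_apply, mul_pow, hsqrt] using hfw
  have hv : MemLp (fun x => √(w x)) 2 μ :=
    (memLp_two_iff_integrable_sq hwm).2 (by simpa only [hsqrt] using hw)
  calc |∫ x, f x * w x ∂μ| ≤ ∫ x, |f x * w x| ∂μ := abs_integral_le_integral_abs
    _ = ∫ x, |f x * √(w x)| * |√(w x)| ∂μ := by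
        congr 1 with x
        rw [← abs_mul, mul_assoc, ← sq, hsqrt]
    _ ≤ _ := by simpa only [mul_pow, hsqrt] using integral_abs_mul_abs_le hu hv

end CauchySchwarz

lemma abs_div_sub_div_le {I₁ I₂ Z₁ Z₂ B D : ℝ} (hZ₁ : 0 < Z₁) (hZ₂ : 0 < Z₂)
    (hI : |I₁ - I₂| ≤ B * D) (hZ : |Z₁ - Z₂| ≤ D) (hE₂ : |I₂ / Z₂| ≤ B) :
    |I₁ / Z₁ - I₂ / Z₂| ≤ 2 * B * D / Z₁ := by
  have hsplit : I₁ / Z₁ - I₂ / Z₂ = (I₁ - I₂ + I₂ / Z₂ * (Z₂ - Z₁)) / Z₁ := by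
    field_simp; ring
  rw [hsplit, abs_div, abs_of_pos hZ₁]
  gcongr
  calc |I₁ - I₂ + I₂ / Z₂ * (Z₂ - Z₁)| ≤ |I₁ - I₂| + |I₂ / Z₂| * |Z₁ - Z₂| := by
        rw [abs_sub_comm Z₁, ← abs_mul]; exact abs_add_le _ _
    _ ≤ B * D + B * D := by
        gcongr; exact (abs_nonneg _).trans hE₂
    _ = 2 * B * D := by ring

lemma inv_le_rpow_of_le_neg_one {z Z p : ℝ} (hz : 0 < z) (hzZ : z ≤ Z) (hZ : Z ≤ 1)
    (hp : p ≤ -1) : Z⁻¹ ≤ z ^ p := by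
  calc Z⁻¹ ≤ z⁻¹ := inv_anti₀ hz hzZ
    _ = z ^ (-1 : ℝ) := (rpow_neg_one z).symm
    _ ≤ z ^ p := rpow_le_rpow_of_exponent_ge hz (hzZ.trans hZ) hp

section Gibbs

variable {Ω : Type*} [MeasurableSpace Ω] {μ : Measure Ω} {Φ f : Ω → ℝ}

lemma integrable_exp_neg [IsFiniteMeasure μ] (hΦm : Measurable Φ) (hΦ : ∀ x, 0 ≤ Φ x) :
    Integrable (fun x => exp (-Φ x)) μ :=
  .of_bound hΦm.neg.exp.aestronglyMeasurable 1 <| ae_of_all _ fun x => by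
    rw [norm_of_nonneg (exp_pos _).le, exp_le_one_iff]; linarith [hΦ x]

lemma integral_exp_neg_pos [IsFiniteMeasure μ] [NeZero μ] (hΦm : Measurable Φ)
    (hΦ : ∀ x, 0 ≤ Φ x) : 0 < ∫ x, exp (-Φ x) ∂μ :=
  integral_exp_pos (integrable_exp_neg hΦm hΦ)

lemma integral_exp_neg_le_one [IsProbabilityMeasure μ] (hΦm : Measurable Φ)
    (hΦ : ∀ x, 0 ≤ Φ x) : ∫ x, exp (-Φ x) ∂μ ≤ 1 := by
  calc ∫ x, exp (-Φ x) ∂μ ≤ ∫ _, (1 : ℝ) ∂μ :=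
        integral_mono (integrable_exp_neg hΦm hΦ) (integrable_const 1)
          fun x => exp_le_one_iff.2 (neg_nonpos.2 (hΦ x))
    _ = 1 := by simp

lemma memLp_two_mul_exp_neg_half (hfm : Measurable f) (hΦm : Measurable Φ)
    (hf : Integrable (fun x => f x ^ 2 * exp (-Φ x)) μ) :
    MemLp (fun x => f x * exp (-(Φ x / 2))) 2 μ :=
  (memLp_two_iff_integrable_sq (by fun_prop)).2 <| by
    simpa only [mul_pow, exp_neg_half_sq] using hf

lemma integrable_mul_exp_neg [IsFiniteMeasure μ] (hfm : Measurable f) (hΦm : Measurable Φ)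
    (hΦ : ∀ x, 0 ≤ Φ x) (hf : Integrable (fun x => f x ^ 2 * exp (-Φ x)) μ) :
    Integrable (fun x => f x * exp (-Φ x)) μ := by
  have hhalf : MemLp (fun x => exp (-(Φ x / 2))) 2 μ :=
    .of_bound (hΦm.div_const 2).neg.exp.aestronglyMeasurable 1 <| ae_of_all _ fun x => by
      rw [norm_of_nonneg (exp_pos _).le, exp_le_one_iff]; linarith [hΦ x]
  simpa only [Pi.mul_def, mul_assoc, ← sq, exp_neg_half_sq]
    using (memLp_two_mul_exp_neg_half hfm hΦm hf).integrable_mul hhalf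

lemma abs_integral_exp_neg_sub_le [IsProbabilityMeasure μ] {Φ₁ Φ₂ : Ω → ℝ}
    (hΦ₁m : Measurable Φ₁) (hΦ₂m : Measurable Φ₂) (hΦ₁ : ∀ x, 0 ≤ Φ₁ x) (hΦ₂ : ∀ x, 0 ≤ Φ₂ x)
    (hΔ : MemLp (fun x => Φ₁ x - Φ₂ x) 2 μ) :
    |∫ x, exp (-Φ₁ x) ∂μ - ∫ x, exp (-Φ₂ x) ∂μ| ≤ √(∫ x, (Φ₁ x - Φ₂ x) ^ 2 ∂μ) := by
  rw [← integral_sub (integrable_exp_neg hΦ₁m hΦ₁) (integrable_exp_neg hΦ₂m hΦ₂)]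
  calc _ ≤ ∫ x, |exp (-Φ₁ x) - exp (-Φ₂ x)| ∂μ := abs_integral_le_integral_abs
    _ ≤ ∫ x, |Φ₁ x - Φ₂ x| ∂μ :=
        integral_mono_of_nonneg (ae_of_all _ fun _ => abs_nonneg _)
          (hΔ.integrable one_le_two).abs
          (ae_of_all _ fun x => abs_exp_neg_sub_exp_neg_le_s19 (hΦ₁ x) (hΦ₂ x))
    _ ≤ _ := integral_abs_le_sqrt_integral_sq hΔ

lemma abs_integral_mul_exp_neg_sub_le [IsFiniteMeasure μ] {Φ₁ Φ₂ : Ω → ℝ}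
    (hfm : Measurable f) (hΦ₁m : Measurable Φ₁) (hΦ₂m : Measurable Φ₂)
    (hΦ₁ : ∀ x, 0 ≤ Φ₁ x) (hΦ₂ : ∀ x, 0 ≤ Φ₂ x) (hΔ : MemLp (fun x => Φ₁ x - Φ₂ x) 2 μ)
    (hf₁ : Integrable (fun x => f x ^ 2 * exp (-Φ₁ x)) μ)
    (hf₂ : Integrable (fun x => f x ^ 2 * exp (-Φ₂ x)) μ) :
    |∫ x, f x * exp (-Φ₁ x) ∂μ - ∫ x, f x * exp (-Φ₂ x) ∂μ| ≤
      (√(∫ x, f x ^ 2 * exp (-Φ₁ x) ∂μ) + √(∫ x, f x ^ 2 * exp (-Φ₂ x) ∂μ)) / 2 *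
        √(∫ x, (Φ₁ x - Φ₂ x) ^ 2 ∂μ) := by
  set u₁ := fun x => f x * exp (-(Φ₁ x / 2))
  set u₂ := fun x => f x * exp (-(Φ₂ x / 2))
  have hu₁ : MemLp u₁ 2 μ := memLp_two_mul_exp_neg_half hfm hΦ₁m hf₁
  have hu₂ : MemLp u₂ 2 μ := memLp_two_mul_exp_neg_half hfm hΦ₂m hf₂
  have hu_sq : ∀ Φ : Ω → ℝ,
      ∫ x, (f x * exp (-(Φ x / 2))) ^ 2 ∂μ = ∫ x, f x ^ 2 * exp (-Φ x) ∂μ :=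
    fun Φ => by simp only [mul_pow, exp_neg_half_sq]
  have hint : ∀ {u : Ω → ℝ}, MemLp u 2 μ → Integrable (fun x => |u x| * |Φ₁ x - Φ₂ x|) μ :=
    fun hu => by simpa only [Pi.mul_def, norm_eq_abs] using hu.norm.integrable_mul hΔ.norm
  have hpoint : ∀ x, |f x * exp (-Φ₁ x) - f x * exp (-Φ₂ x)| ≤
      (|u₁ x| * |Φ₁ x - Φ₂ x| + |u₂ x| * |Φ₁ x - Φ₂ x|) / 2 := fun x => by
    rw [← mul_sub, abs_mul]
    calc |f x| * |exp (-Φ₁ x) - exp (-Φ₂ x)|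
        ≤ |f x| * ((exp (-(Φ₁ x / 2)) + exp (-(Φ₂ x / 2))) / 2 * |Φ₁ x - Φ₂ x|) := by
          gcongr; exact abs_exp_neg_sub_exp_neg_le_mul (hΦ₁ x) (hΦ₂ x)
      _ = _ := by simp only [u₁, u₂, abs_mul, abs_of_pos (exp_pos _)]; ring
  rw [← integral_sub (integrable_mul_exp_neg hfm hΦ₁m hΦ₁ hf₁)
    (integrable_mul_exp_neg hfm hΦ₂m hΦ₂ hf₂)]
  calc _ ≤ ∫ x, |f x * exp (-Φ₁ x) - f x * exp (-Φ₂ x)| ∂μ := abs_integral_le_integral_abs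
    _ ≤ ∫ x, (|u₁ x| * |Φ₁ x - Φ₂ x| + |u₂ x| * |Φ₁ x - Φ₂ x|) / 2 ∂μ :=
        integral_mono_of_nonneg (ae_of_all _ fun _ => abs_nonneg _)
          (((hint hu₁).add (hint hu₂)).div_const 2) (ae_of_all _ hpoint)
    _ = (∫ x, |u₁ x| * |Φ₁ x - Φ₂ x| ∂μ + ∫ x, |u₂ x| * |Φ₁ x - Φ₂ x| ∂μ) / 2 := by
        rw [integral_div, integral_add (hint hu₁) (hint hu₂)]
    _ ≤ _ := by
        have h₁ := integral_abs_mul_abs_le hu₁ hΔ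
        have h₂ := integral_abs_mul_abs_le hu₂ hΔ
        rw [hu_sq] at h₁ h₂
        linarith

noncomputable def gibbsDensity (μ : Measure Ω) (Φ : Ω → ℝ) (x : Ω) : ℝ :=
  exp (-Φ x) / ∫ y, exp (-Φ y) ∂μ

lemma integral_mul_gibbsDensity (F : Ω → ℝ) :
    ∫ x, F x * gibbsDensity μ Φ x ∂μ = (∫ x, F x * exp (-Φ x) ∂μ) / ∫ y, exp (-Φ y) ∂μ := by
  simp only [gibbsDensity, ← mul_div_assoc, integral_div]

section FiniteMeasure

variable [IsFiniteMeasure μ] [NeZero μ]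

lemma integrable_mul_exp_neg_of_mul_gibbsDensity {F : Ω → ℝ} (hΦm : Measurable Φ)
    (hΦ : ∀ x, 0 ≤ Φ x) (hF : Integrable (fun x => F x * gibbsDensity μ Φ x) μ) :
    Integrable (fun x => F x * exp (-Φ x)) μ := by
  have hZ := (integral_exp_neg_pos (μ := μ) hΦm hΦ).ne'
  simpa only [gibbsDensity, mul_div_assoc', div_mul_cancel₀ _ hZ]
    using hF.mul_const (∫ y, exp (-Φ y) ∂μ)

lemma abs_integral_mul_gibbsDensity_le (hfm : Measurable f) (hΦm : Measurable Φ)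
    (hΦ : ∀ x, 0 ≤ Φ x) (hf : Integrable (fun x => f x ^ 2 * gibbsDensity μ Φ x) μ) :
    |∫ x, f x * gibbsDensity μ Φ x ∂μ| ≤ √(∫ x, f x ^ 2 * gibbsDensity μ Φ x ∂μ) := by
  have hZ := integral_exp_neg_pos (μ := μ) hΦm hΦ
  have h := abs_integral_mul_le_sqrt hfm.aestronglyMeasurable
    (fun x => div_nonneg (exp_pos _).le hZ.le) ((integrable_exp_neg hΦm hΦ).div_const _) hf
  rwa [integral_div, div_self hZ.ne', sqrt_one, mul_one] at h

end FiniteMeasure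

variable [IsProbabilityMeasure μ]

lemma integral_sq_mul_exp_neg_le_integral_sq_mul_gibbsDensity
    (hΦm : Measurable Φ) (hΦ : ∀ x, 0 ≤ Φ x) :
    ∫ x, f x ^ 2 * exp (-Φ x) ∂μ ≤ ∫ x, f x ^ 2 * gibbsDensity μ Φ x ∂μ := by
  rw [integral_mul_gibbsDensity]
  exact le_div_self (integral_nonneg fun x => by positivity) (integral_exp_neg_pos hΦm hΦ)
    (integral_exp_neg_le_one hΦm hΦ)

lemma abs_integral_mul_gibbsDensity_sub_le {Φ₁ Φ₂ : Ω → ℝ} {B : ℝ}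
    (hfm : Measurable f) (hΦ₁m : Measurable Φ₁) (hΦ₂m : Measurable Φ₂)
    (hΦ₁ : ∀ x, 0 ≤ Φ₁ x) (hΦ₂ : ∀ x, 0 ≤ Φ₂ x) (hΔ : MemLp (fun x => Φ₁ x - Φ₂ x) 2 μ)
    (hB : 0 ≤ B) (hf₁ : Integrable (fun x => f x ^ 2 * gibbsDensity μ Φ₁ x) μ)
    (hf₂ : Integrable (fun x => f x ^ 2 * gibbsDensity μ Φ₂ x) μ)
    (hmom₁ : ∫ x, f x ^ 2 * gibbsDensity μ Φ₁ x ∂μ ≤ B ^ 2)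
    (hmom₂ : ∫ x, f x ^ 2 * gibbsDensity μ Φ₂ x ∂μ ≤ B ^ 2) :
    |∫ x, f x * gibbsDensity μ Φ₁ x ∂μ - ∫ x, f x * gibbsDensity μ Φ₂ x ∂μ| ≤
      2 * B * √(∫ x, (Φ₁ x - Φ₂ x) ^ 2 ∂μ) / ∫ x, exp (-Φ₁ x) ∂μ := by
  have hmoment : ∀ {Φ : Ω → ℝ}, Measurable Φ → (∀ x, 0 ≤ Φ x) →
      ∫ x, f x ^ 2 * gibbsDensity μ Φ x ∂μ ≤ B ^ 2 → √(∫ x, f x ^ 2 * exp (-Φ x) ∂μ) ≤ B :=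
    fun hΦm hΦ h => sqrt_le_iff.2
      ⟨hB, (integral_sq_mul_exp_neg_le_integral_sq_mul_gibbsDensity hΦm hΦ).trans h⟩
  have hI := abs_integral_mul_exp_neg_sub_le hfm hΦ₁m hΦ₂m hΦ₁ hΦ₂ hΔ
    (integrable_mul_exp_neg_of_mul_gibbsDensity hΦ₁m hΦ₁ hf₁)
    (integrable_mul_exp_neg_of_mul_gibbsDensity hΦ₂m hΦ₂ hf₂)
  have hE₂ := (abs_integral_mul_gibbsDensity_le hfm hΦ₂m hΦ₂ hf₂).trans
    (sqrt_le_iff.2 ⟨hB, hmom₂⟩)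
  rw [integral_mul_gibbsDensity] at hE₂
  rw [integral_mul_gibbsDensity, integral_mul_gibbsDensity]
  refine abs_div_sub_div_le (integral_exp_neg_pos hΦ₁m hΦ₁) (integral_exp_neg_pos hΦ₂m hΦ₂)
    (hI.trans ?_) (abs_integral_exp_neg_sub_le hΦ₁m hΦ₂m hΦ₁ hΦ₂ hΔ) hE₂
  gcongr
  linarith [hmoment hΦ₁m hΦ₁ hmom₁, hmoment hΦ₂m hΦ₂ hmom₂]

end Gibbs

theorem abstract_posterior_moment_stability_general {Ω : Type*} [MeasurableSpace Ω]
    (μ₀ : Measure Ω) [IsProbabilityMeasure μ₀]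
    (Φ₁ Φ₂ : Ω → ℝ) (hΦ₁m : Measurable Φ₁) (hΦ₂m : Measurable Φ₂)
    (hΦ₁ : ∀ x, 0 ≤ Φ₁ x) (hΦ₂ : ∀ x, 0 ≤ Φ₂ x)
    (hsq : Integrable (fun x => (Φ₁ x - Φ₂ x) ^ 2) μ₀)
    (z : ℝ) (hz0 : 0 < z)
    (hZ₁ : z ≤ ∫ x, Real.exp (-Φ₁ x) ∂μ₀)
    (f : Ω → ℝ) (hfm : Measurable f) (B : ℝ) (hB : 0 ≤ B)
    (hf₁ :
      Integrable
        (fun x => f x ^ 2 * (Real.exp (-Φ₁ x) / ∫ y, Real.exp (-Φ₁ y) ∂μ₀)) μ₀)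
    (hf₂ :
      Integrable
        (fun x => f x ^ 2 * (Real.exp (-Φ₂ x) / ∫ y, Real.exp (-Φ₂ y) ∂μ₀)) μ₀)
    (hmom₁ :
      (∫ x, f x ^ 2 * (Real.exp (-Φ₁ x) / ∫ y, Real.exp (-Φ₁ y) ∂μ₀) ∂μ₀) ≤ B ^ 2)
    (hmom₂ :
      (∫ x, f x ^ 2 * (Real.exp (-Φ₂ x) / ∫ y, Real.exp (-Φ₂ y) ∂μ₀) ∂μ₀) ≤ B ^ 2) :
    |(∫ x, f x * (Real.exp (-Φ₁ x) / ∫ y, Real.exp (-Φ₁ y) ∂μ₀) ∂μ₀) -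
        ∫ x, f x * (Real.exp (-Φ₂ x) / ∫ y, Real.exp (-Φ₂ y) ∂μ₀) ∂μ₀| ≤
      2 * B * z ^ (-(3 : ℝ) / 2) *
        Real.sqrt (∫ x, (Φ₁ x - Φ₂ x) ^ 2 ∂μ₀) ∧
    ∀ C : ℝ, 0 ≤ C → ∀ M : ℕ, 1 ≤ M → ∀ s : ℝ, 0 < s →
      Real.sqrt (∫ x, (Φ₁ x - Φ₂ x) ^ 2 ∂μ₀) ≤ C * (M : ℝ) ^ (-s) →
      |(∫ x, f x * (Real.exp (-Φ₁ x) / ∫ y, Real.exp (-Φ₁ y) ∂μ₀) ∂μ₀) -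
          ∫ x, f x * (Real.exp (-Φ₂ x) / ∫ y, Real.exp (-Φ₂ y) ∂μ₀) ∂μ₀| ≤
        2 * B * z ^ (-(3 : ℝ) / 2) * (C * (M : ℝ) ^ (-s)) := by
  have hmain : |∫ x, f x * gibbsDensity μ₀ Φ₁ x ∂μ₀ - ∫ x, f x * gibbsDensity μ₀ Φ₂ x ∂μ₀| ≤
      2 * B * z ^ (-(3 : ℝ) / 2) * √(∫ x, (Φ₁ x - Φ₂ x) ^ 2 ∂μ₀) := by
    refine (abs_integral_mul_gibbsDensity_sub_le hfm hΦ₁m hΦ₂m hΦ₁ hΦ₂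
      ((memLp_two_iff_integrable_sq (by fun_prop)).2 hsq) hB hf₁ hf₂ hmom₁ hmom₂).trans ?_
    rw [div_eq_mul_inv, mul_right_comm]
    gcongr
    exact inv_le_rpow_of_le_neg_one hz0 hZ₁ (integral_exp_neg_le_one hΦ₁m hΦ₁) (by norm_num)
  exact ⟨hmain, fun C _ M _ s _ hD => hmain.trans (by gcongr)⟩

/-- Abstract posterior moment stability (abstract form of the paper's Theorem 1): for
measurable `Φ₁, Φ₂ : Ω → [0,∞)` with normalizing constants `Z_i = ∫ e^{−Φ_i} dμ₀ ≥ z > 0`,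
posterior densities `p_i = e^{−Φ_i}/Z_i`, and a measurable `f` with
`∫ f² p_i dμ₀ ≤ B²` for `i = 1,2`,
`|∫ f p₁ dμ₀ − ∫ f p₂ dμ₀| ≤ 2 B z^{−3/2} (∫ (Φ₁ − Φ₂)² dμ₀)^{1/2}`; in particular, if
`(∫ (Φ₁ − Φ₂)² dμ₀)^{1/2} ≤ C M^{−s}` then the posterior expectations of `f` differ by at
most `2 B z^{−3/2} C M^{−s}`. -/
theorem abstract_posterior_moment_stability {Ω : Type*} [MeasurableSpace Ω]
    (μ₀ : Measure Ω) [IsProbabilityMeasure μ₀]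
    (Φ₁ Φ₂ : Ω → ℝ) (hΦ₁m : Measurable Φ₁) (hΦ₂m : Measurable Φ₂)
    (hΦ₁ : ∀ x, 0 ≤ Φ₁ x) (hΦ₂ : ∀ x, 0 ≤ Φ₂ x)
    (hsq : Integrable (fun x => (Φ₁ x - Φ₂ x) ^ 2) μ₀)
    (z : ℝ) (hz0 : 0 < z) (hz1 : z ≤ 1)
    (hZ₁ : z ≤ ∫ x, Real.exp (-Φ₁ x) ∂μ₀)
    (hZ₂ : z ≤ ∫ x, Real.exp (-Φ₂ x) ∂μ₀)
    (f : Ω → ℝ) (hfm : Measurable f) (B : ℝ) (hB : 0 ≤ B)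
    (hf₁ :
      Integrable
        (fun x => f x ^ 2 * (Real.exp (-Φ₁ x) / ∫ y, Real.exp (-Φ₁ y) ∂μ₀)) μ₀)
    (hf₂ :
      Integrable
        (fun x => f x ^ 2 * (Real.exp (-Φ₂ x) / ∫ y, Real.exp (-Φ₂ y) ∂μ₀)) μ₀)
    (hmom₁ :
      (∫ x, f x ^ 2 * (Real.exp (-Φ₁ x) / ∫ y, Real.exp (-Φ₁ y) ∂μ₀) ∂μ₀) ≤ B ^ 2)
    (hmom₂ :
      (∫ x, f x ^ 2 * (Real.exp (-Φ₂ x) / ∫ y, Real.exp (-Φ₂ y) ∂μ₀) ∂μ₀) ≤ B ^ 2) :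
    |(∫ x, f x * (Real.exp (-Φ₁ x) / ∫ y, Real.exp (-Φ₁ y) ∂μ₀) ∂μ₀) -
        ∫ x, f x * (Real.exp (-Φ₂ x) / ∫ y, Real.exp (-Φ₂ y) ∂μ₀) ∂μ₀| ≤
      2 * B * z ^ (-(3 : ℝ) / 2) *
        Real.sqrt (∫ x, (Φ₁ x - Φ₂ x) ^ 2 ∂μ₀) ∧
    ∀ C : ℝ, 0 ≤ C → ∀ M : ℕ, 1 ≤ M → ∀ s : ℝ, 0 < s →
      Real.sqrt (∫ x, (Φ₁ x - Φ₂ x) ^ 2 ∂μ₀) ≤ C * (M : ℝ) ^ (-s) →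
      |(∫ x, f x * (Real.exp (-Φ₁ x) / ∫ y, Real.exp (-Φ₁ y) ∂μ₀) ∂μ₀) -
          ∫ x, f x * (Real.exp (-Φ₂ x) / ∫ y, Real.exp (-Φ₂ y) ∂μ₀) ∂μ₀| ≤
        2 * B * z ^ (-(3 : ℝ) / 2) * (C * (M : ℝ) ^ (-s)) :=
  abstract_posterior_moment_stability_general μ₀ Φ₁ Φ₂ hΦ₁m hΦ₂m hΦ₁ hΦ₂ hsq z hz0 hZ₁ f hfm B hB
    hf₁ hf₂ hmom₁ hmom₂
end
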